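/- arXiv:1701.04513 — 3 statements merged into one kernel-verified Lean document; each statement's English description precedes it below -/
import Mathlib

section
/- The operator ∇^G u := ∑_{g∈G} dg ⊗ χ·((g^{-1})^* u) satisfies the connection Leibniz rule with respect to the crossed product module structure: ∇^G(ν(f g) u) = ν(f g)(∇^G u) + ν(f dg) u, for every f g in C*_c(B⋊G) and every section u. -/
open scoped BigOperators

/-- **The operator `∇^G` satisfies the connection Leibniz rule.**
`G` acts freely and properly discontinuously on `M` (encoded by the local
finiteness hypothesis), `χ ∈ C^∞_c(M)` satisfies `∑_{g∈G} g^*χ = 1`, sections of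
the contravariant bundle `E` are modelled as maps `M → V` with
`(g^* s)(p) = ρ(g)(s(p·g))`, and `∇^G u := ∑_{g∈G} dg ⊗ χ·((g⁻¹)^* u)` (with the
convention `de = 0`).  Degree-one elements `∑_h dh ⊗ w(h)` are modelled as maps
`w : G → (M → V)` (the `e`-coefficient being `0`), with the
`Ω_c(B⋊G)`-module structure `νΩ` determined by the universal differential
algebra; `ν(f dg)` is the action of the degree-one form `f·dg`.  Then
`∇^G(ν(f g) u) = ν(f g)(∇^G u) + ν(f dg) u`. -/
theorem nablaG_leibniz_rule
    {M G V : Type*} [Group G] [DecidableEq G] [AddCommGroup V] [Module ℂ V]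
    (act : M → G → M)
    (hact : ∀ (p : M) (g g' : G), act (act p g) g' = act p (g * g'))
    (hact1 : ∀ p : M, act p 1 = p)
    (ρ : G →* Module.End ℂ V)
    (χ : M → ℂ)
    (hχ : ∀ p : M, ∑ᶠ g : G, χ (act p g) = 1)
    (hfin : ∀ p : M, (Function.support fun g : G => χ (act p g)).Finite)
    -- pullback of functions and contravariant action on sections
    (pull : G → (M → ℂ) → (M → ℂ))
    (hpull : ∀ (g : G) (f : M → ℂ), pull g f = fun p => f (act p g))
    (gactS : G → (M → V) → (M → V))
    (hgactS : ∀ (g : G) (s : M → V), gactS g s = fun p => ρ g (s (act p g)))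
    -- vector representation of `f·g` on sections
    (νS : (M → ℂ) → G → (M → V) → (M → V))
    (hνS : ∀ (f : M → ℂ) (g : G) (s : M → V), νS f g s = fun p => f p • gactS g s p)
    -- action of `f·g` on degree-one elements `∑_h dh ⊗ w(h)`
    (νΩ : (M → ℂ) → G → (G → M → V) → (G → M → V))
    (hνΩ : ∀ (f : M → ℂ) (g : G) (w : G → M → V), νΩ f g w = fun h =>
      if h = 1 then 0
      else (fun p => pull h⁻¹ f p • w (g⁻¹ * h) p)
        - (if h = g then (fun p => pull g⁻¹ f p • ∑ᶠ g₁ : G, gactS g₁ (w g₁) p) else 0))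
    -- action of the degree-one form `f·dg` on sections
    (νfd : (M → ℂ) → G → (M → V) → (G → M → V))
    (hνfd : ∀ (f : M → ℂ) (g : G) (u : M → V), νfd f g u = fun h =>
      if g ≠ 1 ∧ h = g then (fun p => pull g⁻¹ f p • u p) else 0)
    -- the operator `∇^G u = ∑_g dg ⊗ χ·((g⁻¹)^* u)`
    (nablaG : (M → V) → (G → M → V))
    (hnabla : ∀ u : M → V, nablaG u = fun h =>
      if h = 1 then 0 else fun p => χ p • gactS h⁻¹ u p) :
    ∀ (f : M → ℂ) (g : G) (u : M → V),
      nablaG (νS f g u) = νΩ f g (nablaG u) + νfd f g u := by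
  intro f g u
  have hρ : ∀ (a : G) (v : V), ρ a⁻¹ (ρ a v) = v := by
    intro a v
    have h1 : ρ a⁻¹ * ρ a = 1 := by rw [← map_mul, inv_mul_cancel, map_one]
    calc ρ a⁻¹ (ρ a v) = (ρ a⁻¹ * ρ a) v := rfl
    _ = v := by rw [h1]; rfl
  have hρ2 : ∀ (a : G) (v : V), ρ a (ρ a⁻¹ v) = v := by
    intro a v
    have h1 : ρ a * ρ a⁻¹ = 1 := by rw [← map_mul, mul_inv_cancel, map_one]
    calc ρ a (ρ a⁻¹ v) = (ρ a * ρ a⁻¹) v := rfl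
    _ = v := by rw [h1]; rfl
  have key : ∀ p : M, (∑ᶠ g₁ : G, gactS g₁ (nablaG u g₁) p) = u p - χ p • u p := by
    intro p
    have h1 : ∀ g₁ : G, gactS g₁ (nablaG u g₁) p
        = (χ (act p g₁) • u p) - (if g₁ = 1 then χ p • u p else 0) := by
      intro g₁
      simp only [hgactS, hnabla]
      by_cases hg : g₁ = 1
      · simp [hg, hact1]
      · have hv : (ρ g₁) ((ρ g₁⁻¹) (u (act (act p g₁) g₁⁻¹))) = u p := by
          rw [hact, mul_inv_cancel, hact1]; exact hρ2 g₁ (u p)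
        simp only [hg, if_false, if_neg hg, map_smul, hv, sub_zero]
    rw [finsum_congr h1, finsum_sub_distrib]
    · rw [finsum_eq_single _ (1 : G) (fun x hx => if_neg hx), if_pos rfl,
        ← finsum_smul' (hfin p), hχ, one_smul]
    · exact (hfin p).subset (by
        intro x hx
        simp only [Function.mem_support] at hx ⊢
        intro h0
        exact hx (by simp [h0]))
    · exact (Set.finite_singleton (1 : G)).subset (by
        intro x hx
        simp only [Function.mem_support] at hx
        by_contra hne
        simp only [Set.mem_singleton_iff] at hne
        exact hx (if_neg hne))
  funext h p
  simp only [hνΩ, hνfd, Pi.add_apply]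
  simp only [key]
  simp only [hnabla, hνS, hgactS, hpull]
  by_cases h1 : h = 1
  · subst h1
    by_cases hg1 : g = 1
    · simp [hg1]
    · simp [hg1, Ne.symm hg1]
  · simp only [if_neg h1, Pi.sub_apply]
    by_cases hhg : h = g
    · subst hhg
      simp only [if_pos rfl, inv_mul_cancel, ne_eq, h1, not_false_eq_true, and_self, if_pos,
        Pi.zero_apply, map_smul, hact, hact1, hρ, hρ2]
      module
    · have hne : g⁻¹ * h ≠ 1 := by
        intro hc
        exact hhg (by rw [← one_mul h, ← mul_inv_cancel g, mul_assoc, hc, mul_one])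
      have hcond : ¬ (g ≠ 1 ∧ h = g) := fun hc => hhg hc.2
      simp only [if_neg hhg, sub_zero, if_neg hne, if_neg hcond, Pi.zero_apply, add_zero,
        map_smul, hact]
      rw [mul_inv_rev, inv_inv, smul_comm, map_mul]; rfl
end

section
/- The non-commutative inner product is left C*_c(B⋊G)-linear in the first variable: for all f ∈ C*_c(B⋊G) and compactly supported sections s₁, s₂, f ⋆ ⟨s₁, s₂⟩_{E_♭⋊G} = ⟨ν(f)(s₁), s₂⟩_{E_♭⋊G}. -/
/-- **The non-commutative inner product is left `C*_c(B⋊G)`-linear in the first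
variable.**  With `⟨s₁,s₂⟩_{E_♭⋊G} = ∑_{g∈G} ⟨s₁, g^* s₂⟩_{E_♭} · g`, the
crossed product `(f g) ⋆ (f' g') = f·(g^* f')·(g g')` and the vector
representation `ν(f g)(s) = f·(g^* s)`, one has
`f ⋆ ⟨s₁, s₂⟩_{E_♭⋊G} = ⟨ν(f)(s₁), s₂⟩_{E_♭⋊G}` for `f = f₀·g₀ ∈ C*_c(B⋊G)`. -/
theorem crossed_inner_left_linear
    {B G S : Type*} [Group G]
    (pullB : G → (B → ℂ) → (B → ℂ))
    (hpullBmul : ∀ (g g' : G) (f : B → ℂ), pullB g (pullB g' f) = pullB (g * g') f)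
    -- multiplication of sections by functions, contravariant `G`-action
    (fmulS : (B → ℂ) → S → S)
    (gactS : G → S → S)
    (hgactmul : ∀ (g g' : G) (s : S), gactS g (gactS g' s) = gactS (g * g') s)
    -- Bismut-bundle inner product, linear in the first variable over functions
    (innerE : S → S → (B → ℂ))
    (hlin : ∀ (f : B → ℂ) (s₁ s₂ : S), innerE (fmulS f s₁) s₂ = f * innerE s₁ s₂)
    (hinv : ∀ (g : G) (s₁ s₂ : S),
      innerE (gactS g s₁) (gactS g s₂) = pullB g (innerE s₁ s₂))
    -- the `C*_c(B⋊G)`-valued inner product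
    (ip : S → S → G → (B → ℂ))
    (hip : ∀ s₁ s₂, ip s₁ s₂ = fun g => innerE s₁ (gactS g s₂))
    -- vector representation `ν(f g)(s) = f·(g^* s)`
    (ν : (B → ℂ) → G → S → S)
    (hν : ∀ (f : B → ℂ) (g : G) (s : S), ν f g s = fmulS f (gactS g s))
    -- left module action of `f₀·g₀ ∈ C*_c(B⋊G)` on `C*_c(B⋊G)`-valued functions
    (convMul : ((B → ℂ) × G) → (G → B → ℂ) → (G → B → ℂ))
    (hconv : ∀ (a : (B → ℂ) × G) (F : G → B → ℂ),
      convMul a F = fun h => a.1 * pullB a.2 (F (a.2⁻¹ * h))) :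
    ∀ (f₀ : B → ℂ) (g₀ : G) (s₁ s₂ : S),
      convMul (f₀, g₀) (ip s₁ s₂) = ip (ν f₀ g₀ s₁) s₂ := by
  intro f₀ g₀ s₁ s₂
  funext h
  rw [hconv, hip, hip, hν]
  simp only []
  rw [hlin]
  have : gactS h s₂ = gactS g₀ (gactS (g₀⁻¹ * h) s₂) := by
    rw [hgactmul, mul_inv_cancel_left]
  rw [this, hinv]
end

section
/- If F is given by a family of compactly supported tensors K^{g₁} = g₁^* K̃ with ∑_{g₁∈G} (g₁^* K̃) s = 0 for all sections s, then F s = ∑_{g₁} dg₁ ⊗ (g₁^*)^{-1}(K^{g₁} s) defines an Ω_c(B⋊G)-linear map; in particular K̃ = dχ works, where χ satisfies ∑_g g^*χ = 1. -/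
/-!
Write `F u = ∑_{h ≠ 1} dh ⊗ K̃((h⁻¹)^* u)`. Since `(h⁻¹)^*(f · g^* u) = (h⁻¹)^* f · (h⁻¹g)^* u`,
the `dh`-components of `ν(f·g)(F u)` and `F(ν(f·g) u)` agree for `h ≠ g` by `C^∞`-linearity of
`K̃`. The `dg`-component of `ν(f·g)(F u)` also carries
`∑_{g₁ ≠ 1} g₁^*(F u)_{g₁} = ∑_{g₁} (g₁^* K̃) u - K̃ u`; compact support makes this sum finite, so
the `g₁ = 1` term can be split off, and the vanishing condition turns it into `-K̃ u`.
For `K̃ = dχ` one has `(g^* K̃) u = (g^* dχ) · u`, so the vanishing condition is `∑_g g^* dχ = 0`.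
-/

open Function

theorem finsum_update_zero {α V : Type*} [DecidableEq α] [AddCommGroup V] {φ : α → V}
    (hφ : (support φ).Finite) (a : α) :
    ∑ᶠ x, update φ a 0 x = ∑ᶠ x, φ x - φ a := by
  have hupd : (support (update φ a 0)).Finite := support_update_zero φ a ▸ hφ.sdiff
  rw [eq_sub_iff_add_eq]
  calc ∑ᶠ x, update φ a 0 x + φ a
      = ∑ᶠ x, update φ a 0 x + ∑ᶠ x, Pi.single a (φ a) x := by
        rw [finsum_eq_single (Pi.single a (φ a)) a fun x hx => Pi.single_eq_of_ne hx _,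
          Pi.single_eq_same]
    _ = ∑ᶠ x, φ x := by
        rw [← finsum_add_distrib hupd ((Set.finite_singleton a).subset Pi.support_single_subset)]
        exact finsum_congr fun x => by rcases eq_or_ne x a with rfl | hx <;> simp [*]

section Pullback

variable {M G R V : Type*} [Monoid G] [Semiring R] [AddCommMonoid V] [Module R V]
  {act : M → G → M} {ρ : G →* Module.End R V}

variable (act ρ) in
/-- `g^* s` for the right action `act` of `G` on `M`, twisted by `ρ` on the fibre `V`. -/
def pullbackSection (g : G) (s : M → V) : M → V :=
  fun p => ρ g (s (act p g))

theorem pullbackSection_pullbackSection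
    (hact : ∀ (p : M) (g g' : G), act (act p g) g' = act p (g * g')) (g g' : G) (s : M → V) :
    pullbackSection act ρ g (pullbackSection act ρ g' s) = pullbackSection act ρ (g * g') s := by
  funext p
  simp [pullbackSection, hact, map_mul]

theorem pullbackSection_one (hact1 : ∀ p : M, act p 1 = p) (s : M → V) :
    pullbackSection act ρ 1 s = s := by
  funext p
  simp [pullbackSection, hact1]

theorem pullbackSection_zero (g : G) : pullbackSection act ρ g (0 : M → V) = 0 := by
  funext p
  simp [pullbackSection]

theorem pullbackSection_smul (g : G) (f : M → R) (s : M → V) :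
    pullbackSection act ρ g (fun p => f p • s p)
      = fun p => f (act p g) • pullbackSection act ρ g s p := by
  funext p
  simp [pullbackSection]

end Pullback

section TensorFamily

variable {M G R V : Type*} [Group G] [Semiring R] [AddCommGroup V] [Module R V]
  {act : M → G → M} {ρ : G →* Module.End R V}

variable (act ρ) in
/-- The vector representation `ν(f·g)` of `C*_c(B⋊G)` on sections. -/
def vectorRepSection (f : M → R) (g : G) (s : M → V) : M → V :=
  fun p => f p • pullbackSection act ρ g s p

theorem pullbackSection_inv_vectorRepSection
    (hact : ∀ (p : M) (g g' : G), act (act p g) g' = act p (g * g')) (f : M → R) (g h : G)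
    (u : M → V) :
    pullbackSection act ρ h⁻¹ (vectorRepSection act ρ f g u)
      = fun p => f (act p h⁻¹) • pullbackSection act ρ (h⁻¹ * g) u p := by
  unfold vectorRepSection
  rw [pullbackSection_smul, pullbackSection_pullbackSection hact]

theorem pullbackSection_smul_pullbackSection_inv
    (hact : ∀ (p : M) (g g' : G), act (act p g) g' = act p (g * g'))
    (hact1 : ∀ p : M, act p 1 = p) (χ : M → R) (g : G) (s : M → V) :
    pullbackSection act ρ g (fun q => χ q • pullbackSection act ρ g⁻¹ s q)
      = fun p => χ (act p g) • s p := by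
  rw [pullbackSection_smul, pullbackSection_pullbackSection hact, mul_inv_cancel,
    pullbackSection_one hact1]

theorem finite_support_pullbackSection_of_support_subset {K : (M → V) → M → V} {C : Set M}
    (hKsupp : ∀ (s : M → V) (p : M), p ∉ C → K s p = 0)
    (hCfin : ∀ p : M, {g : G | act p g ∈ C}.Finite) (s : M → V) (p : M) :
    (support fun g₁ : G => pullbackSection act ρ g₁ (K (pullbackSection act ρ g₁⁻¹ s)) p).Finite :=
  (hCfin p).subset fun g₁ hg₁ => by
    by_contra hC
    exact hg₁ (by simp [pullbackSection, hKsupp _ _ hC])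

variable [DecidableEq G]

variable (act ρ) in
/-- The vector representation `ν(f·g)` on degree-one elements `∑_{h ≠ 1} dh ⊗ w h`. -/
noncomputable def vectorRepOneForm (f : M → R) (g : G) (w : G → M → V) : G → M → V :=
  fun h => if h = 1 then 0
    else (fun p => f (act p h⁻¹) • w (g⁻¹ * h) p)
      - if h = g then fun p => f (act p g⁻¹) • ∑ᶠ g₁, pullbackSection act ρ g₁ (w g₁) p else 0

variable (act ρ) in
/-- `F s = ∑_{h ≠ 1} dh ⊗ K((h⁻¹)^* s)`. -/
def tensorFamilyMap (K : (M → V) → M → V) (s : M → V) : G → M → V :=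
  fun h => if h = 1 then 0 else K (pullbackSection act ρ h⁻¹ s)

theorem finsum_pullbackSection_tensorFamilyMap (hact1 : ∀ p : M, act p 1 = p)
    {K : (M → V) → M → V} {u : M → V} {p : M}
    (hfin : (support fun g₁ : G =>
      pullbackSection act ρ g₁ (K (pullbackSection act ρ g₁⁻¹ u)) p).Finite)
    (hzero : ∑ᶠ g₁ : G, pullbackSection act ρ g₁ (K (pullbackSection act ρ g₁⁻¹ u)) p = 0) :
    ∑ᶠ g₁ : G, pullbackSection act ρ g₁ (tensorFamilyMap act ρ K u g₁) p = -K u p := by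
  have hupd : (fun g₁ : G => pullbackSection act ρ g₁ (tensorFamilyMap act ρ K u g₁) p)
      = update (fun g₁ => pullbackSection act ρ g₁ (K (pullbackSection act ρ g₁⁻¹ u)) p) 1 0 := by
    funext g₁
    rcases eq_or_ne g₁ 1 with rfl | h1
    · simp [tensorFamilyMap, pullbackSection_zero]
    · simp [tensorFamilyMap, h1]
  rw [hupd, finsum_update_zero hfin, hzero, inv_one, pullbackSection_one hact1,
    pullbackSection_one hact1, zero_sub]

theorem vectorRepOneForm_tensorFamilyMap
    (hact : ∀ (p : M) (g g' : G), act (act p g) g' = act p (g * g'))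
    (hact1 : ∀ p : M, act p 1 = p) {K : (M → V) → M → V}
    (hK : ∀ (f : M → R) (s : M → V), K (fun p => f p • s p) = fun p => f p • K s p)
    {u : M → V}
    (hfin : ∀ p : M, (support fun g₁ : G =>
      pullbackSection act ρ g₁ (K (pullbackSection act ρ g₁⁻¹ u)) p).Finite)
    (hzero : ∀ p : M,
      ∑ᶠ g₁ : G, pullbackSection act ρ g₁ (K (pullbackSection act ρ g₁⁻¹ u)) p = 0)
    (f : M → R) (g : G) :
    vectorRepOneForm act ρ f g (tensorFamilyMap act ρ K u)
      = tensorFamilyMap act ρ K (vectorRepSection act ρ f g u) := by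
  funext h
  rcases eq_or_ne h 1 with rfl | h1
  · simp [vectorRepOneForm, tensorFamilyMap]
  rcases eq_or_ne h g with rfl | hg
  · funext p
    simp only [vectorRepOneForm, if_neg h1, ↓reduceIte, Pi.sub_apply,
      finsum_pullbackSection_tensorFamilyMap hact1 (hfin p) (hzero p)]
    simp [tensorFamilyMap, h1, pullbackSection_inv_vectorRepSection hact,
      pullbackSection_one hact1, hK]
  · have hgh : g⁻¹ * h ≠ 1 := fun h' => hg (inv_mul_eq_one.mp h').symm
    simp [vectorRepOneForm, tensorFamilyMap, h1, hg, hgh, pullbackSection_inv_vectorRepSection hact,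
      hK]

end TensorFamily

theorem tensor_family_omega_linear_general
    {M G V : Type*} [Group G] [DecidableEq G] [AddCommGroup V] [Module ℂ V]
    (act : M → G → M)
    (hact : ∀ (p : M) (g g' : G), act (act p g) g' = act p (g * g'))
    (hact1 : ∀ p : M, act p 1 = p)
    (ρ : G →* Module.End ℂ V)
    (pull : G → (M → ℂ) → (M → ℂ))
    (hpull : ∀ (g : G) (f : M → ℂ), pull g f = fun p => f (act p g))
    (gactS : G → (M → V) → (M → V))
    (hgactS : ∀ (g : G) (s : M → V), gactS g s = fun p => ρ g (s (act p g)))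
    -- vector representation of `f·g` on sections and on degree-one elements
    (νS : (M → ℂ) → G → (M → V) → (M → V))
    (hνS : ∀ (f : M → ℂ) (g : G) (s : M → V), νS f g s = fun p => f p • gactS g s p)
    (νΩ : (M → ℂ) → G → (G → M → V) → (G → M → V))
    (hνΩ : ∀ (f : M → ℂ) (g : G) (w : G → M → V), νΩ f g w = fun h =>
      if h = 1 then 0
      else (fun p => pull h⁻¹ f p • w (g⁻¹ * h) p)
        - (if h = g then (fun p => pull g⁻¹ f p • ∑ᶠ g₁ : G, gactS g₁ (w g₁) p) else 0))
    -- the tensor `K̃`: `C^∞(M)`-linear and compactly supported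
    (Kt : (M → V) → (M → V))
    (hKlin : ∀ (f : M → ℂ) (s : M → V), Kt (fun p => f p • s p) = fun p => f p • Kt s p)
    (C : Set M)
    (hKsupp : ∀ (s : M → V) (p : M), p ∉ C → Kt s p = 0)
    (hCfin : ∀ p : M, {g : G | act p g ∈ C}.Finite)
    -- the vanishing condition `∑_{g₁∈G} (g₁^* K̃) s = 0`
    (hzero : ∀ (s : M → V) (p : M), ∑ᶠ g₁ : G, gactS g₁ (Kt (gactS g₁⁻¹ s)) p = 0)
    -- the operator `F s = ∑_{g₁} dg₁ ⊗ K̃((g₁⁻¹)^* s)` (with `de = 0`)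
    (F : (M → V) → (G → M → V))
    (hF : ∀ s : M → V, F s = fun h => if h = 1 then 0 else Kt (gactS h⁻¹ s)) :
    -- `F` is `Ω_c(B⋊G)`-linear
    (∀ (f : M → ℂ) (g : G) (u : M → V), νΩ f g (F u) = F (νS f g u)) ∧
    -- in particular `K̃ = dχ` works, since `∑_g g^*χ = 1` forces `∑_g g^*(dχ) = 0`
    (∀ dχ : M → ℂ, (∀ p : M, ∑ᶠ g : G, dχ (act p g) = 0) →
      (∀ p : M, (Function.support fun g : G => dχ (act p g)).Finite) →
      ∀ (f : M → ℂ) (g : G) (u : M → V),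
        νΩ f g (fun h => if h = 1 then 0 else fun p => dχ p • gactS h⁻¹ u p)
          = fun h => if h = 1 then 0
              else fun p => dχ p • gactS h⁻¹ (νS f g u) p) := by
  obtain rfl : pull = fun g f p => f (act p g) := funext₂ hpull
  obtain rfl : gactS = pullbackSection act ρ := funext₂ hgactS
  obtain rfl : νS = vectorRepSection act ρ := by funext f g s; exact hνS f g s
  obtain rfl : νΩ = vectorRepOneForm act ρ := by funext f g w; exact hνΩ f g w
  obtain rfl : F = tensorFamilyMap act ρ Kt := funext hF
  refine ⟨fun f g u => ?_, fun dχ hχ hχfin f g u => ?_⟩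
  · exact vectorRepOneForm_tensorFamilyMap hact hact1 hKlin
      (finite_support_pullbackSection_of_support_subset hKsupp hCfin u) (hzero u) f g
  · have hdχ := fun g₁ => pullbackSection_smul_pullbackSection_inv (ρ := ρ) hact hact1 dχ g₁ u
    refine vectorRepOneForm_tensorFamilyMap (K := fun s p => dχ p • s p) hact hact1
      (fun f s => funext fun p => smul_comm _ _ _) (fun p => ?_) (fun p => ?_) f g
    · simp_rw [hdχ]
      exact (hχfin p).subset (support_smul_subset_left _ _)
    · simp_rw [hdχ]
      rw [← finsum_smul' (hχfin p), hχ p, zero_smul]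

/-- **Compactly supported tensor families with vanishing sum give
`Ω_c(B⋊G)`-linear maps.**  If `K̃` is a compactly supported tensor (a bundle
endomorphism, i.e. `C^∞`-linear and supported in a set `C` meeting only finitely
many translates of each orbit) and `∑_{g₁∈G} (g₁^* K̃) s = 0` for all sections
`s` (where `(g^*A)(s) = g^*(A((g⁻¹)^* s))`), then
`F s = ∑_{g₁} dg₁ ⊗ (g₁^*)⁻¹((g₁^* K̃) s)` commutes with the representation
`ν(f·g)` of `C*_c(B⋊G)` on `Ω_e^•(E_♭⋊G)`, i.e. is `Ω_c(B⋊G)`-linear; in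
particular `K̃ = dχ` works when `∑_g g^*χ = 1` (so that `∑_g g^*(dχ) = 0`). -/
theorem tensor_family_omega_linear
    {M G V : Type*} [Group G] [DecidableEq G] [AddCommGroup V] [Module ℂ V]
    (act : M → G → M)
    (hact : ∀ (p : M) (g g' : G), act (act p g) g' = act p (g * g'))
    (hact1 : ∀ p : M, act p 1 = p)
    (ρ : G →* Module.End ℂ V)
    (pull : G → (M → ℂ) → (M → ℂ))
    (hpull : ∀ (g : G) (f : M → ℂ), pull g f = fun p => f (act p g))
    (gactS : G → (M → V) → (M → V))
    (hgactS : ∀ (g : G) (s : M → V), gactS g s = fun p => ρ g (s (act p g)))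
    -- vector representation of `f·g` on sections and on degree-one elements
    (νS : (M → ℂ) → G → (M → V) → (M → V))
    (hνS : ∀ (f : M → ℂ) (g : G) (s : M → V), νS f g s = fun p => f p • gactS g s p)
    (νΩ : (M → ℂ) → G → (G → M → V) → (G → M → V))
    (hνΩ : ∀ (f : M → ℂ) (g : G) (w : G → M → V), νΩ f g w = fun h =>
      if h = 1 then 0
      else (fun p => pull h⁻¹ f p • w (g⁻¹ * h) p)
        - (if h = g then (fun p => pull g⁻¹ f p • ∑ᶠ g₁ : G, gactS g₁ (w g₁) p) else 0))
    -- the tensor `K̃`: `C^∞(M)`-linear and compactly supported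
    (Kt : (M → V) → (M → V))
    (hKadd : ∀ s₁ s₂ : M → V, Kt (s₁ + s₂) = Kt s₁ + Kt s₂)
    (hKlin : ∀ (f : M → ℂ) (s : M → V), Kt (fun p => f p • s p) = fun p => f p • Kt s p)
    (C : Set M)
    (hKsupp : ∀ (s : M → V) (p : M), p ∉ C → Kt s p = 0)
    (hCfin : ∀ p : M, {g : G | act p g ∈ C}.Finite)
    -- the vanishing condition `∑_{g₁∈G} (g₁^* K̃) s = 0`
    (hzero : ∀ (s : M → V) (p : M), ∑ᶠ g₁ : G, gactS g₁ (Kt (gactS g₁⁻¹ s)) p = 0)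
    -- the operator `F s = ∑_{g₁} dg₁ ⊗ K̃((g₁⁻¹)^* s)` (with `de = 0`)
    (F : (M → V) → (G → M → V))
    (hF : ∀ s : M → V, F s = fun h => if h = 1 then 0 else Kt (gactS h⁻¹ s)) :
    -- `F` is `Ω_c(B⋊G)`-linear
    (∀ (f : M → ℂ) (g : G) (u : M → V), νΩ f g (F u) = F (νS f g u)) ∧
    -- in particular `K̃ = dχ` works, since `∑_g g^*χ = 1` forces `∑_g g^*(dχ) = 0`
    (∀ dχ : M → ℂ, (∀ p : M, ∑ᶠ g : G, dχ (act p g) = 0) →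
      (∀ p : M, (Function.support fun g : G => dχ (act p g)).Finite) →
      ∀ (f : M → ℂ) (g : G) (u : M → V),
        νΩ f g (fun h => if h = 1 then 0 else fun p => dχ p • gactS h⁻¹ u p)
          = fun h => if h = 1 then 0
              else fun p => dχ p • gactS h⁻¹ (νS f g u) p) :=
  tensor_family_omega_linear_general act hact hact1 ρ pull hpull gactS hgactS νS hνS νΩ hνΩ Kt hKlin
    C hKsupp hCfin hzero F hF
end
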